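/- arXiv:2106.07155 — 3 statements merged into one kernel-verified Lean document; each statement's English description precedes it below -/
import Mathlib

section
/- Let E be a real inner product space, let γ > 1 and ε ∈ (0,1), and let C : E → E be a γ-approximate compressor, i.e. ‖x − C(x)‖² ≤ (1/γ)‖x‖² for all x ∈ E. Then for any g, e ∈ E, setting P = g + e and e' = P − C(P), one has ‖e'‖² ≤ (1/(γε))‖e‖² + (1/(γ(1−ε)))‖g‖². -/
/-- If `C` is a `γ`-approximate compressor on a real inner product
space `E`, then for any `g, e ∈ E`, with `P = g + e` and `e' = P - C P`, we have
`‖e'‖² ≤ (1/(γε))‖e‖² + (1/(γ(1-ε)))‖g‖²`. -/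
theorem stmt_0 {E : Type*} [NormedAddCommGroup E] [InnerProductSpace ℝ E]
    (γ ε : ℝ) (hγ : 1 < γ) (hε0 : 0 < ε) (hε1 : ε < 1)
    (C : E → E) (hC : ∀ x : E, ‖x - C x‖ ^ 2 ≤ (1 / γ) * ‖x‖ ^ 2)
    (g e : E) :
    ‖(g + e) - C (g + e)‖ ^ 2 ≤
      (1 / (γ * ε)) * ‖e‖ ^ 2 + (1 / (γ * (1 - ε))) * ‖g‖ ^ 2 := by
  have h1 := hC (g + e)
  have h2 : ‖g + e‖ ≤ ‖g‖ + ‖e‖ := norm_add_le g e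
  have h3 : ‖g + e‖ ^ 2 ≤ (‖g‖ + ‖e‖) ^ 2 := by
    have := norm_nonneg (g + e); nlinarith
  have hγ0 : (0:ℝ) < γ := by linarith
  have key : (1/γ) * (‖g‖ + ‖e‖) ^ 2 ≤
      (1 / (γ * ε)) * ‖e‖ ^ 2 + (1 / (γ * (1 - ε))) * ‖g‖ ^ 2 := by
    have h1ε : (0:ℝ) < 1 - ε := by linarith
    rw [div_mul_eq_mul_div, div_mul_eq_mul_div, div_mul_eq_mul_div,
      div_add_div _ _ (by positivity) (by positivity),
      div_le_div_iff₀ (by positivity) (by positivity)]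
    nlinarith [sq_nonneg (γ*(ε*‖g‖ - (1-ε)*‖e‖)), norm_nonneg g, norm_nonneg e,
      mul_pos hε0 h1ε, sq_nonneg (‖g‖+‖e‖)]
  calc ‖(g + e) - C (g + e)‖ ^ 2 ≤ (1/γ) * ‖g + e‖ ^ 2 := h1
    _ ≤ (1/γ) * (‖g‖ + ‖e‖) ^ 2 := by
        apply mul_le_mul_of_nonneg_left h3 (by positivity)
    _ ≤ _ := key
end

section
/- Let γ > 1 and ε ∈ (0,1) satisfy γε > 1. Let (ē_t)_{t≥0} and (Δ̄_t)_{t≥0} be sequences of nonnegative reals with ē_0 = 0 and ē_t ≤ (1/(γε)) ē_{t−1} + (1/(γ(1−ε))) Δ̄_{t−1} for all t ≥ 1. Then for every T ≥ 1, Σ_{t=0}^{T−1} ē_t ≤ (1/(γ(1−ε)))·(1 + 1/(γε−1))·Σ_{t=0}^{T−1} Δ̄_t. -/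
/-!
Summing `e (t+1) ≤ q e t + c d t` over `t < T` and using `e 0 = 0` bounds the partial sum
`S (T+1)` of `e` by `q S T + c D T`, where `D` is the partial sum of `d`. Since `K = c / (1 - q)`
is the fixed point of `K ↦ q K + c`, the bound `S T ≤ K D T` propagates by induction on `T`
(the partial sums of `d ≥ 0` being monotone). For `q = 1/(γε)`, `c = 1/(γ(1-ε))` one has
`1 / (1 - q) = 1 + 1/(γε - 1)`.
-/

open Finset

theorem sum_range_succ_le_of_le_mul_add {e d : ℕ → ℝ} {q c : ℝ} (he0 : e 0 = 0)
    (hrec : ∀ t, e (t + 1) ≤ q * e t + c * d t) (T : ℕ) :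
    ∑ t ∈ range (T + 1), e t ≤ q * ∑ t ∈ range T, e t + c * ∑ t ∈ range T, d t := by
  rw [sum_range_succ', he0, add_zero, mul_sum, mul_sum, ← sum_add_distrib]
  exact sum_le_sum fun t _ => hrec t

theorem sum_range_le_div_one_sub_mul_sum {e d : ℕ → ℝ} {q c : ℝ} (hq0 : 0 ≤ q) (hq1 : q < 1)
    (hc : 0 ≤ c) (hd : ∀ t, 0 ≤ d t) (he0 : e 0 = 0)
    (hrec : ∀ t, e (t + 1) ≤ q * e t + c * d t) (T : ℕ) :
    ∑ t ∈ range T, e t ≤ c / (1 - q) * ∑ t ∈ range T, d t := by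
  have hK : 0 ≤ c / (1 - q) := div_nonneg hc (sub_nonneg.2 hq1.le)
  have hfix : q * (c / (1 - q)) + c = c / (1 - q) := by
    field_simp [(sub_pos.2 hq1).ne']
    ring
  induction T with
  | zero => simp
  | succ T ih =>
    calc ∑ t ∈ range (T + 1), e t
        ≤ q * ∑ t ∈ range T, e t + c * ∑ t ∈ range T, d t :=
          sum_range_succ_le_of_le_mul_add he0 hrec T
      _ ≤ q * (c / (1 - q) * ∑ t ∈ range T, d t) + c * ∑ t ∈ range T, d t := by gcongr
      _ = c / (1 - q) * ∑ t ∈ range T, d t := by linear_combination (∑ t ∈ range T, d t) * hfix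
      _ ≤ c / (1 - q) * ∑ t ∈ range (T + 1), d t := by
          gcongr
          · exact fun t _ _ => hd t
          · exact T.le_succ

theorem stmt_1_general (γ ε : ℝ) (hγ : 1 < γ) (hε1 : ε < 1)
    (hγε : 1 < γ * ε)
    (ebar Δbar : ℕ → ℝ)
    (hΔ_nonneg : ∀ t, 0 ≤ Δbar t)
    (he0 : ebar 0 = 0)
    (hrec : ∀ t : ℕ, 1 ≤ t →
      ebar t ≤ (1 / (γ * ε)) * ebar (t - 1) + (1 / (γ * (1 - ε))) * Δbar (t - 1)) :
    ∀ T : ℕ, 1 ≤ T →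
      ∑ t ∈ Finset.range T, ebar t ≤
        (1 / (γ * (1 - ε))) * (1 + 1 / (γ * ε - 1)) * ∑ t ∈ Finset.range T, Δbar t := by
  intro T _
  have hγε0 : 0 < γ * ε := one_pos.trans hγε
  have hc : 0 ≤ 1 / (γ * (1 - ε)) := by
    have : 0 < 1 - ε := sub_pos.2 hε1
    positivity
  have hgeom : 1 / (γ * (1 - ε)) / (1 - 1 / (γ * ε)) =
      1 / (γ * (1 - ε)) * (1 + 1 / (γ * ε - 1)) := by
    field_simp [(sub_pos.2 hγε).ne', right_ne_zero_of_mul hγε0.ne']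
    ring
  rw [← hgeom]
  refine sum_range_le_div_one_sub_mul_sum (by positivity) ?_ hc hΔ_nonneg he0 (fun t => ?_) T
  · rw [div_lt_one hγε0]
    exact hγε
  · simpa using hrec (t + 1) le_add_self

/-- Summing the error-contraction recursion
`ē_t ≤ (1/(γε)) ē_{t-1} + (1/(γ(1-ε))) Δ̄_{t-1}` with `ē_0 = 0` yields
`Σ_{t<T} ē_t ≤ (1/(γ(1-ε)))(1 + 1/(γε-1)) Σ_{t<T} Δ̄_t`. -/
theorem stmt_1 (γ ε : ℝ) (hγ : 1 < γ) (hε0 : 0 < ε) (hε1 : ε < 1)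
    (hγε : 1 < γ * ε)
    (ebar Δbar : ℕ → ℝ)
    (he_nonneg : ∀ t, 0 ≤ ebar t) (hΔ_nonneg : ∀ t, 0 ≤ Δbar t)
    (he0 : ebar 0 = 0)
    (hrec : ∀ t : ℕ, 1 ≤ t →
      ebar t ≤ (1 / (γ * ε)) * ebar (t - 1) + (1 / (γ * (1 - ε))) * Δbar (t - 1)) :
    ∀ T : ℕ, 1 ≤ T →
      ∑ t ∈ Finset.range T, ebar t ≤
        (1 / (γ * (1 - ε))) * (1 + 1 / (γ * ε - 1)) * ∑ t ∈ Finset.range T, Δbar t :=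
  stmt_1_general γ ε hγ hε1 hγε ebar Δbar hΔ_nonneg he0 hrec
end

section
/- Let E be a real inner product space, γ > 1, and C : E → E a γ-approximate compressor (‖x − C(x)‖² ≤ (1/γ)‖x‖² for all x). For m workers indexed by i ∈ {1,…,m}, let (g_t^i)_{t≥0} be arbitrary vectors in E and define recursively e_0^i = 0, P_t^i = g_t^i + e_t^i, and e_{t+1}^i = P_t^i − C(P_t^i). Then for every ε ∈ (0,1) with γε > 1 and every T ≥ 1, Σ_{t=0}^{T−1} (1/m) Σ_{i=1}^m ‖e_t^i‖² ≤ (1/(γ(1−ε)))·(1 + 1/(γε−1))·Σ_{t=0}^{T−1} (1/m) Σ_{i=1}^m ‖g_t^i‖², and consequently Σ_{t=0}^{T−1} ‖(1/m) Σ_{i=1}^m e_t^i‖² is bounded by the same quantity. -/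
/-! With `β = γε - 1 > 0`, Young's inequality `‖g + e‖² ≤ (1 + 1/β)‖g‖² + (1 + β)‖e‖²` and the
compressor bound give the one-step contraction `‖e_{t+1}‖² ≤ ε‖e_t‖² + γ⁻¹(1 + 1/β)‖g_t‖²`,
since `(1 + β)/γ = ε`. Averaging over the workers and summing over `t < T`, the vanishing of
`e_0` lets the left side absorb `ε` times itself, which leaves the factor `1/(1 - ε)`. The
averaged error is controlled by the averaged squared errors through Jensen's inequality. -/

open Finset

lemma norm_add_sq_le_of_pos {E : Type*} [SeminormedAddCommGroup E] {β : ℝ} (hβ : 0 < β)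
    (x y : E) : ‖x + y‖ ^ 2 ≤ (1 + 1 / β) * ‖x‖ ^ 2 + (1 + β) * ‖y‖ ^ 2 := by
  have hsq : (‖x‖ + ‖y‖) ^ 2 ≤ (1 + 1 / β) * ‖x‖ ^ 2 + (1 + β) * ‖y‖ ^ 2 := by
    have key : β * ((1 + 1 / β) * ‖x‖ ^ 2 + (1 + β) * ‖y‖ ^ 2 - (‖x‖ + ‖y‖) ^ 2) =
        (‖x‖ - β * ‖y‖) ^ 2 := by
      field_simp
      ring
    nlinarith [sq_nonneg (‖x‖ - β * ‖y‖)]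
  exact (pow_le_pow_left₀ (norm_nonneg _) (norm_add_le x y) 2).trans hsq

lemma norm_sub_compress_sq_le {E : Type*} [SeminormedAddCommGroup E] {γ ε : ℝ} (hγ : 0 < γ)
    (hγε : 1 < γ * ε) {C : E → E} (hC : ∀ x : E, ‖x - C x‖ ^ 2 ≤ (1 / γ) * ‖x‖ ^ 2) (g e : E) :
    ‖(g + e) - C (g + e)‖ ^ 2 ≤ ε * ‖e‖ ^ 2 + (1 / γ) * (1 + 1 / (γ * ε - 1)) * ‖g‖ ^ 2 :=
  calc ‖(g + e) - C (g + e)‖ ^ 2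
      ≤ (1 / γ) * ((1 + 1 / (γ * ε - 1)) * ‖g‖ ^ 2 + (1 + (γ * ε - 1)) * ‖e‖ ^ 2) :=
        (hC _).trans <| by gcongr; exact norm_add_sq_le_of_pos (by linarith) g e
    _ = ε * ‖e‖ ^ 2 + (1 / γ) * (1 + 1 / (γ * ε - 1)) * ‖g‖ ^ 2 := by
        field_simp
        ring

lemma sum_range_le_div_of_le_mul_add {A b : ℕ → ℝ} {ε c : ℝ} (hε : ε < 1) (hA₀ : A 0 = 0)
    (hA : ∀ t, 0 ≤ A t) (hstep : ∀ t, A (t + 1) ≤ ε * A t + c * b t) (T : ℕ) :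
    ∑ t ∈ range T, A t ≤ c / (1 - ε) * ∑ t ∈ range T, b t := by
  have hshift : ∑ t ∈ range T, A t ≤ ∑ t ∈ range T, A (t + 1) := by
    have := sum_range_succ A T
    rw [sum_range_succ', hA₀, add_zero] at this
    linarith [hA T]
  have hsum : ∑ t ∈ range T, A (t + 1) ≤ ε * ∑ t ∈ range T, A t + c * ∑ t ∈ range T, b t := by
    rw [mul_sum, mul_sum, ← sum_add_distrib]
    exact sum_le_sum fun t _ => hstep t
  rw [div_mul_eq_mul_div, le_div_iff₀ (by linarith)]
  linarith

lemma norm_avg_sq_le_avg_norm_sq {E : Type*} [SeminormedAddCommGroup E] [NormedSpace ℝ E]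
    {m : ℕ} (x : Fin m → E) :
    ‖(1 / (m : ℝ)) • ∑ i, x i‖ ^ 2 ≤ (1 / (m : ℝ)) * ∑ i, ‖x i‖ ^ 2 :=
  calc ‖(1 / (m : ℝ)) • ∑ i, x i‖ ^ 2 = (‖∑ i, x i‖ / m) ^ 2 := by
        rw [norm_smul, Real.norm_of_nonneg (by positivity), one_div_mul_eq_div]
    _ ≤ ((∑ i, ‖x i‖) / m) ^ 2 := by gcongr; exact norm_sum_le _ _
    _ ≤ (∑ i, ‖x i‖ ^ 2) / m := by
        simpa using sum_div_card_sq_le_sum_sq_div_card (s := univ) (f := fun i => ‖x i‖)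
    _ = (1 / (m : ℝ)) * ∑ i, ‖x i‖ ^ 2 := by rw [one_div_mul_eq_div]

theorem stmt_2_general {E : Type*} [NormedAddCommGroup E] [InnerProductSpace ℝ E]
    (γ : ℝ) (hγ : 1 < γ)
    (C : E → E) (hC : ∀ x : E, ‖x - C x‖ ^ 2 ≤ (1 / γ) * ‖x‖ ^ 2)
    (m : ℕ)
    (g : ℕ → Fin m → E) (e : ℕ → Fin m → E)
    (he0 : ∀ i, e 0 i = 0)
    (herec : ∀ t i, e (t + 1) i = (g t i + e t i) - C (g t i + e t i))
    (ε : ℝ) (hε1 : ε < 1) (hγε : 1 < γ * ε)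
    (T : ℕ) :
    (∑ t ∈ Finset.range T, (1 / (m : ℝ)) * ∑ i, ‖e t i‖ ^ 2 ≤
        (1 / (γ * (1 - ε))) * (1 + 1 / (γ * ε - 1)) *
          ∑ t ∈ Finset.range T, (1 / (m : ℝ)) * ∑ i, ‖g t i‖ ^ 2) ∧
    (∑ t ∈ Finset.range T, ‖(1 / (m : ℝ)) • ∑ i, e t i‖ ^ 2 ≤
        (1 / (γ * (1 - ε))) * (1 + 1 / (γ * ε - 1)) *
          ∑ t ∈ Finset.range T, (1 / (m : ℝ)) * ∑ i, ‖g t i‖ ^ 2) := by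
  have hγ₀ : 0 < γ := by linarith
  set c := (1 / γ) * (1 + 1 / (γ * ε - 1))
  have hstep : ∀ t, (1 / (m : ℝ)) * ∑ i, ‖e (t + 1) i‖ ^ 2 ≤
      ε * ((1 / (m : ℝ)) * ∑ i, ‖e t i‖ ^ 2) + c * ((1 / (m : ℝ)) * ∑ i, ‖g t i‖ ^ 2) := by
    intro t
    calc (1 / (m : ℝ)) * ∑ i, ‖e (t + 1) i‖ ^ 2
        ≤ (1 / (m : ℝ)) * ∑ i, (ε * ‖e t i‖ ^ 2 + c * ‖g t i‖ ^ 2) := by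
          gcongr with i
          rw [herec]
          exact norm_sub_compress_sq_le hγ₀ hγε hC _ _
      _ = ε * ((1 / (m : ℝ)) * ∑ i, ‖e t i‖ ^ 2) + c * ((1 / (m : ℝ)) * ∑ i, ‖g t i‖ ^ 2) := by
          rw [sum_add_distrib, ← mul_sum, ← mul_sum]
          ring
  have hconst : (1 / (γ * (1 - ε))) * (1 + 1 / (γ * ε - 1)) = c / (1 - ε) := by
    simp only [c, one_div, mul_inv]
    ring
  have herr := sum_range_le_div_of_le_mul_add (A := fun t => (1 / (m : ℝ)) * ∑ i, ‖e t i‖ ^ 2)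
    hε1 (by simp [he0]) (fun t => by positivity) hstep T
  rw [hconst]
  exact ⟨herr, (sum_le_sum fun t _ => norm_avg_sq_le_avg_norm_sq (e t)).trans herr⟩

/-- Bounded-error lemma for error feedback with a `γ`-approximate
compressor: the accumulated per-worker averaged squared errors are bounded by
`(1/(γ(1-ε)))(1 + 1/(γε-1))` times the averaged squared local updates, and the
same bound holds for the squared norm of the averaged error. -/
theorem stmt_2 {E : Type*} [NormedAddCommGroup E] [InnerProductSpace ℝ E]
    (γ : ℝ) (hγ : 1 < γ)
    (C : E → E) (hC : ∀ x : E, ‖x - C x‖ ^ 2 ≤ (1 / γ) * ‖x‖ ^ 2)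
    (m : ℕ) (hm : 1 ≤ m)
    (g : ℕ → Fin m → E) (e : ℕ → Fin m → E)
    (he0 : ∀ i, e 0 i = 0)
    (herec : ∀ t i, e (t + 1) i = (g t i + e t i) - C (g t i + e t i))
    (ε : ℝ) (hε0 : 0 < ε) (hε1 : ε < 1) (hγε : 1 < γ * ε)
    (T : ℕ) (hT : 1 ≤ T) :
    (∑ t ∈ Finset.range T, (1 / (m : ℝ)) * ∑ i, ‖e t i‖ ^ 2 ≤
        (1 / (γ * (1 - ε))) * (1 + 1 / (γ * ε - 1)) *
          ∑ t ∈ Finset.range T, (1 / (m : ℝ)) * ∑ i, ‖g t i‖ ^ 2) ∧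
    (∑ t ∈ Finset.range T, ‖(1 / (m : ℝ)) • ∑ i, e t i‖ ^ 2 ≤
        (1 / (γ * (1 - ε))) * (1 + 1 / (γ * ε - 1)) *
          ∑ t ∈ Finset.range T, (1 / (m : ℝ)) * ∑ i, ‖g t i‖ ^ 2) :=
  stmt_2_general γ hγ C hC m g e he0 herec ε hε1 hγε T
end
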